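/- arXiv:1010.3825 — 7 statements merged into one kernel-verified Lean document; each statement's English description precedes it below -/
import Mathlib

section
/- Let I be a closed interval and f : I → ℝ a bounded upper semicontinuous function. Let L_J f denote the least concave majorant of the restriction of f to a subinterval J. Suppose b₁ < a₁ < a₂ < b₂ are points of I such that 2·f((aᵢ+bᵢ)/2) > L_I f(aᵢ) + L_I f(bᵢ) for i = 1,2. Then L_I f(x) = L_{[b₁,b₂]} f(x) for all x with a₁ ≤ x ≤ a₂. -/
/-!
Fix `x ∈ [a₁, a₂]` and let `R = L_{[b₁,b₂]} f (x)`. Since `x` is interior, `L_I f (x) ≤ R` as soon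
as no chord of the graph of `f` over `[u, v] ∋ x` passes above height `R` at `x`: the slopes then
separate and give an affine majorant of `f` on `I` through `(x, R)`. Chords with both ends in
`[b₁, b₂]` are fine by concavity of `L_{[b₁,b₂]} f`. A chord with `u < b₁` lies below `L_I f` on
`[b₁, a₁]`, so by the hypothesis its value at `m₁ = (a₁ + b₁)/2` is below `f m₁`; moving its left
end to `m₁` only raises its value at `x`. The right end is moved to `(a₂ + b₂)/2` in the same way.
-/

/-- The least concave majorant of `f` on the set `S`, evaluated at `x`:
the pointwise infimum of all functions concave on `S` that dominate `f` on `S`. -/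
noncomputable def lcmaj (S : Set ℝ) (f : ℝ → ℝ) (x : ℝ) : ℝ :=
  sInf {y : ℝ | ∃ g : ℝ → ℝ, ConcaveOn ℝ S g ∧ (∀ z ∈ S, f z ≤ g z) ∧ g x = y}

open Set

section lcmaj

variable {S : Set ℝ} {f g : ℝ → ℝ} {x : ℝ}

theorem lcmaj_le (hg : ConcaveOn ℝ S g) (hfg : ∀ z ∈ S, f z ≤ g z) (hx : x ∈ S) :
    lcmaj S f x ≤ g x :=
  csInf_le ⟨f x, by rintro _ ⟨h, -, hfh, rfl⟩; exact hfh x hx⟩ ⟨g, hg, hfg, rfl⟩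

theorem lcmaj_set_nonempty (hS : Convex ℝ S) (hf : BddAbove (f '' S)) (x : ℝ) :
    {y : ℝ | ∃ g : ℝ → ℝ, ConcaveOn ℝ S g ∧ (∀ z ∈ S, f z ≤ g z) ∧ g x = y}.Nonempty := by
  obtain ⟨M, hM⟩ := hf
  exact ⟨M, fun _ ↦ M, concaveOn_const M hS, fun z hz ↦ hM (mem_image_of_mem f hz), rfl⟩

theorem le_lcmaj (hS : Convex ℝ S) (hf : BddAbove (f '' S)) (hx : x ∈ S) :
    f x ≤ lcmaj S f x :=
  le_csInf (lcmaj_set_nonempty hS hf x) (by rintro _ ⟨g, -, hfg, rfl⟩; exact hfg x hx)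

theorem concaveOn_lcmaj (hS : Convex ℝ S) (hf : BddAbove (f '' S)) :
    ConcaveOn ℝ S (lcmaj S f) := by
  refine ⟨hS, fun p hp q hq a b ha hb hab ↦ le_csInf (lcmaj_set_nonempty hS hf _) ?_⟩
  rintro _ ⟨g, hg, hfg, rfl⟩
  calc a • lcmaj S f p + b • lcmaj S f q ≤ a • g p + b • g q := by
        gcongr
        exacts [lcmaj_le hg hfg hp, lcmaj_le hg hfg hq]
    _ ≤ g (a • p + b • q) := hg.2 hp hq ha hb hab

theorem lcmaj_le_lcmaj_of_subset {T : Set ℝ} (hS : Convex ℝ S) (hf : BddAbove (f '' S))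
    (hT : Convex ℝ T) (hTS : T ⊆ S) (hx : x ∈ T) : lcmaj T f x ≤ lcmaj S f x :=
  lcmaj_le ((concaveOn_lcmaj hS hf).subset hTS hT) (fun _ hz ↦ le_lcmaj hS hf (hTS hz)) hx

end lcmaj

/-- The chord of `f` over `[u, v]` is at height `≤ R` at `x`, cleared of the denominator `v - u`. -/
def ChordBelow (f : ℝ → ℝ) (x R u v : ℝ) : Prop :=
  (v - x) * f u + (x - u) * f v ≤ (v - u) * R

section chord

variable {f g : ℝ → ℝ} {S : Set ℝ} {x R u v p : ℝ}

theorem ChordBelow.mono (h : ChordBelow g x R u v) (hu : f u ≤ g u) (hv : f v ≤ g v)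
    (hux : u ≤ x) (hxv : x ≤ v) : ChordBelow f x R u v := by
  unfold ChordBelow at *
  nlinarith

theorem ConcaveOn.chordBelow (hg : ConcaveOn ℝ S g) (hu : u ∈ S) (hv : v ∈ S) (hup : u ≤ p)
    (hpv : p ≤ v) : ChordBelow g p (g p) u v := by
  unfold ChordBelow
  rcases hup.eq_or_lt with rfl | hup
  · linarith
  rcases hpv.eq_or_lt with rfl | hpv
  · linarith
  have := hg.neg.secant_mono_aux1 hu hv hup hpv
  simp only [Pi.neg_apply] at this
  linarith

theorem ChordBelow.of_left (habove : ChordBelow f p (f p) u v) (h : ChordBelow f x R p v)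
    (hxv : x ≤ v) (huv : u ≤ v) (hpv : p < v) : ChordBelow f x R u v := by
  unfold ChordBelow at *
  refine le_of_mul_le_mul_left ?_ (sub_pos.2 hpv)
  nlinarith [mul_le_mul_of_nonneg_left habove (sub_nonneg.2 hxv),
    mul_le_mul_of_nonneg_left h (sub_nonneg.2 huv)]

theorem ChordBelow.of_right (habove : ChordBelow f p (f p) u v) (h : ChordBelow f x R u p)
    (hux : u ≤ x) (huv : u ≤ v) (hup : u < p) : ChordBelow f x R u v := by
  unfold ChordBelow at *
  refine le_of_mul_le_mul_left ?_ (sub_pos.2 hup)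
  nlinarith [mul_le_mul_of_nonneg_left habove (sub_nonneg.2 hux),
    mul_le_mul_of_nonneg_left h (sub_nonneg.2 huv)]

theorem chordBelow_midpoint (hg : ConcaveOn ℝ S g) (hfg : ∀ z ∈ S, f z ≤ g z) (hu : u ∈ S)
    (hv : v ∈ S) (huv : u < v) {a b : ℝ} (ha : a ∈ Icc u v) (hb : b ∈ Icc u v)
    (hmid : g a + g b < 2 * f ((a + b) / 2)) :
    ChordBelow f ((a + b) / 2) (f ((a + b) / 2)) u v := by
  have hca := (hg.chordBelow hu hv ha.1 ha.2).mono (hfg u hu) (hfg v hv) ha.1 ha.2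
  have hcb := (hg.chordBelow hu hv hb.1 hb.2).mono (hfg u hu) (hfg v hv) hb.1 hb.2
  unfold ChordBelow at *
  nlinarith [mul_lt_mul_of_pos_left hmid (sub_pos.2 huv)]

theorem chordBelow_lcmaj (hS : Convex ℝ S) (hf : BddAbove (f '' S)) (hu : u ∈ S) (hv : v ∈ S)
    (hux : u ≤ x) (hxv : x ≤ v) : ChordBelow f x (lcmaj S f x) u v :=
  ((concaveOn_lcmaj hS hf).chordBelow hu hv hux hxv).mono (le_lcmaj hS hf hu) (le_lcmaj hS hf hv)
    hux hxv

theorem lcmaj_le_of_chordBelow {A B : ℝ} (hx : x ∈ Ioo A B)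
    (h : ∀ u ∈ Icc A x, ∀ v ∈ Icc x B, ChordBelow f x R u v) : lcmaj (Icc A B) f x ≤ R := by
  obtain ⟨hAx, hxB⟩ := hx
  have hsep : ∀ u ∈ Ico A x, ∀ v ∈ Ioc x B, (f v - R) / (v - x) ≤ (R - f u) / (x - u) := by
    intro u hu v hv
    have huv := h u ⟨hu.1, hu.2.le⟩ v ⟨hv.1.le, hv.2⟩
    unfold ChordBelow at huv
    rw [div_le_div_iff₀ (sub_pos.2 hv.1) (sub_pos.2 hu.2)]
    linarith
  set s := sSup ((fun v ↦ (f v - R) / (v - x)) '' Ioc x B)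
  have hs_left : ∀ u ∈ Ico A x, s ≤ (R - f u) / (x - u) := fun u hu ↦
    csSup_le ((nonempty_Ioc.2 hxB).image _) (forall_mem_image.2 fun v hv ↦ hsep u hu v hv)
  have hs_right : ∀ v ∈ Ioc x B, (f v - R) / (v - x) ≤ s := fun v hv ↦
    le_csSup ⟨_, forall_mem_image.2 fun w hw ↦ hsep A ⟨le_rfl, hAx⟩ w hw⟩ (mem_image_of_mem _ hv)
  have hfx : f x ≤ R := by
    have hxB' := h x ⟨hAx.le, le_rfl⟩ B ⟨hxB.le, le_rfl⟩
    unfold ChordBelow at hxB'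
    nlinarith
  have haffine : ConcaveOn ℝ (Icc A B) (fun y ↦ R + s * (y - x)) :=
    ⟨convex_Icc A B, fun _ _ _ _ a b _ _ hab ↦
      le_of_eq (by simp only [smul_eq_mul]; linear_combination (R - s * x) * hab)⟩
  refine (lcmaj_le haffine (fun y hy ↦ ?_) ⟨hAx.le, hxB.le⟩).trans_eq (by ring)
  rcases lt_trichotomy y x with hyx | rfl | hxy
  · have := hs_left y ⟨hy.1, hyx⟩
    rw [le_div_iff₀ (sub_pos.2 hyx)] at this
    linarith
  · simpa using hfx
  · have := hs_right y ⟨hxy, hy.2⟩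
    rw [div_le_iff₀ (sub_pos.2 hxy)] at this
    linarith

end chord

section extend

variable {f g : ℝ → ℝ} {A B x R a b : ℝ}

theorem chordBelow_extend_right {c : ℝ} (hg : ConcaveOn ℝ (Icc A B) g)
    (hfg : ∀ z ∈ Icc A B, f z ≤ g z) (hmid : g a + g b < 2 * f ((a + b) / 2))
    (hAc : A ≤ c) (hxa : x ≤ a) (hab : a < b)
    (h : ∀ u ∈ Icc c x, ∀ v ∈ Icc x b, ChordBelow f x R u v) :
    ∀ u ∈ Icc c x, ∀ v ∈ Icc x B, ChordBelow f x R u v := by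
  rintro u ⟨hcu, hux⟩ v ⟨hxv, hvB⟩
  rcases le_or_gt v b with hvb | hbv
  · exact h u ⟨hcu, hux⟩ v ⟨hxv, hvb⟩
  refine ChordBelow.of_right (p := (a + b) / 2) ?_ (h u ⟨hcu, hux⟩ _ ⟨by linarith, by linarith⟩)
    hux (by linarith) (by linarith)
  exact chordBelow_midpoint hg hfg ⟨by linarith, by linarith⟩ ⟨by linarith, hvB⟩ (by linarith)
    ⟨by linarith, by linarith⟩ ⟨by linarith, by linarith⟩ hmid

theorem chordBelow_extend_left {d : ℝ} (hg : ConcaveOn ℝ (Icc A B) g)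
    (hfg : ∀ z ∈ Icc A B, f z ≤ g z) (hmid : g a + g b < 2 * f ((a + b) / 2))
    (hba : b < a) (hax : a ≤ x) (hdB : d ≤ B)
    (h : ∀ u ∈ Icc b x, ∀ v ∈ Icc x d, ChordBelow f x R u v) :
    ∀ u ∈ Icc A x, ∀ v ∈ Icc x d, ChordBelow f x R u v := by
  rintro u ⟨hAu, hux⟩ v ⟨hxv, hvd⟩
  rcases le_or_gt b u with hbu | hub
  · exact h u ⟨hbu, hux⟩ v ⟨hxv, hvd⟩
  refine ChordBelow.of_left (p := (a + b) / 2) ?_ (h _ ⟨by linarith, by linarith⟩ v ⟨hxv, hvd⟩)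
    hxv (by linarith) (by linarith)
  exact chordBelow_midpoint hg hfg ⟨hAu, by linarith⟩ ⟨by linarith, by linarith⟩ (by linarith)
    ⟨by linarith, by linarith⟩ ⟨by linarith, by linarith⟩ hmid

end extend

theorem stmt_0_general (A B : ℝ) (f : ℝ → ℝ) (M : ℝ)
    (hbd : ∀ x ∈ Set.Icc A B, |f x| ≤ M)
    (a₁ a₂ b₁ b₂ : ℝ)
    (hA : A ≤ b₁) (hB : b₂ ≤ B)
    (h1 : b₁ < a₁) (h3 : a₂ < b₂)
    (hmid1 : 2 * f ((a₁ + b₁) / 2) > lcmaj (Set.Icc A B) f a₁ + lcmaj (Set.Icc A B) f b₁)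
    (hmid2 : 2 * f ((a₂ + b₂) / 2) > lcmaj (Set.Icc A B) f a₂ + lcmaj (Set.Icc A B) f b₂) :
    ∀ x ∈ Set.Icc a₁ a₂, lcmaj (Set.Icc A B) f x = lcmaj (Set.Icc b₁ b₂) f x := by
  rintro x ⟨hx₁, hx₂⟩
  have hf : BddAbove (f '' Icc A B) :=
    ⟨M, forall_mem_image.2 fun z hz ↦ (abs_le.1 (hbd z hz)).2⟩
  have hsub : Icc b₁ b₂ ⊆ Icc A B := Icc_subset_Icc hA hB
  have hf' : BddAbove (f '' Icc b₁ b₂) := hf.mono (image_mono hsub)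
  have hL := concaveOn_lcmaj (convex_Icc A B) hf
  have hfL (z : ℝ) (hz : z ∈ Icc A B) := le_lcmaj (convex_Icc A B) hf hz
  have hinner : ∀ u ∈ Icc b₁ x, ∀ v ∈ Icc x b₂, ChordBelow f x (lcmaj (Icc b₁ b₂) f x) u v :=
    fun u hu v hv ↦ chordBelow_lcmaj (convex_Icc b₁ b₂) hf' ⟨hu.1, by linarith [hu.2, hv.2]⟩
      ⟨by linarith [hu.1, hv.1], hv.2⟩ hu.2 hv.1
  refine le_antisymm (lcmaj_le_of_chordBelow ⟨by linarith, by linarith⟩ ?_)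
    (lcmaj_le_lcmaj_of_subset (convex_Icc A B) hf (convex_Icc b₁ b₂) hsub
      ⟨by linarith, by linarith⟩)
  exact chordBelow_extend_left hL hfL hmid1 h1 hx₁ le_rfl
    (chordBelow_extend_right hL hfL hmid2 hA hx₂ h3 hinner)

theorem stmt_0 (A B : ℝ) (f : ℝ → ℝ) (M : ℝ)
    (hbd : ∀ x ∈ Set.Icc A B, |f x| ≤ M)
    (husc : UpperSemicontinuousOn f (Set.Icc A B))
    (a₁ a₂ b₁ b₂ : ℝ)
    (hA : A ≤ b₁) (hB : b₂ ≤ B)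
    (h1 : b₁ < a₁) (h2 : a₁ < a₂) (h3 : a₂ < b₂)
    (hmid1 : 2 * f ((a₁ + b₁) / 2) > lcmaj (Set.Icc A B) f a₁ + lcmaj (Set.Icc A B) f b₁)
    (hmid2 : 2 * f ((a₂ + b₂) / 2) > lcmaj (Set.Icc A B) f a₂ + lcmaj (Set.Icc A B) f b₂) :
    ∀ x ∈ Set.Icc a₁ a₂, lcmaj (Set.Icc A B) f x = lcmaj (Set.Icc b₁ b₂) f x :=
  stmt_0_general A B f M hbd a₁ a₂ b₁ b₂ hA hB h1 h3 hmid1 hmid2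
end

section
/- Marshall's lemma: let I be an interval, f : I → ℝ a bounded function, and g : I → ℝ a concave function. Then the least concave majorant L_I f of f satisfies sup_{x∈I} |L_I f(x) − g(x)| ≤ sup_{x∈I} |f(x) − g(x)|. -/
/-- Marshall's lemma: if `g` is concave on the interval `I` and `|f - g| ≤ C` on `I`,
then `|L_I f - g| ≤ C` on `I`. -/
theorem stmt_1 (I : Set ℝ) (hI : Convex ℝ I) (f g : ℝ → ℝ) (M : ℝ)
    (hbd : ∀ x ∈ I, |f x| ≤ M)
    (hg : ConcaveOn ℝ I g) (C : ℝ)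
    (hfg : ∀ x ∈ I, |f x - g x| ≤ C) :
    ∀ x ∈ I, |lcmaj I f x - g x| ≤ C := by
  intro x hx
  have hgC : ConcaveOn ℝ I (fun z => g z + C) := hg.add (concaveOn_const C hI)
  have hmaj : ∀ z ∈ I, f z ≤ g z + C := fun z hz => by
    have := abs_le.mp (hfg z hz)
    linarith [this.2]
  have hmem : g x + C ∈ {y : ℝ | ∃ h : ℝ → ℝ,
      ConcaveOn ℝ I h ∧ (∀ z ∈ I, f z ≤ h z) ∧ h x = y} :=
    ⟨fun z => g z + C, hgC, hmaj, rfl⟩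
  have hlb : ∀ y ∈ {y : ℝ | ∃ h : ℝ → ℝ,
      ConcaveOn ℝ I h ∧ (∀ z ∈ I, f z ≤ h z) ∧ h x = y}, g x - C ≤ y := by
    rintro y ⟨h, _, hmajh, rfl⟩
    have h1 := abs_le.mp (hfg x hx)
    have h2 := hmajh x hx
    linarith [h1.1]
  have hle : lcmaj I f x ≤ g x + C := csInf_le ⟨g x - C, hlb⟩ hmem
  have hge : g x - C ≤ lcmaj I f x := le_csInf ⟨_, hmem⟩ hlb
  rw [abs_le]
  constructor <;> [linarith; linarith]
end

section
/- Let Ψ : ℝ → ℝ satisfy Ψ(h) ≤ M for all h (some M > 0) and Ψ(h)/|h| → −∞ as |h| → ∞. Then for every b > 0 there exists c₀ > b such that for all c ≥ c₀, the least concave majorant of Ψ over ℝ agrees with the least concave majorant of Ψ over [−c,c] at every point h with |h| ≤ b. -/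
/-!
Restricting a concave majorant on `ℝ` to `[-c, c]` gives `L_ℝ Ψ ≥ L_[-c,c] Ψ`. Conversely, cap a
concave majorant `g` on `[-c, c]` at `M` and take its supporting line at `h`. With `p = b + 1` and
`γ = min (Ψ (-p)) (Ψ p)`, the capped function lies in `[γ, M]` at `-p` and `p` and below `M`
at `h`, so the slope of that line is at most `M - γ` in absolute value, uniformly in `g`.
Since `Ψ z ≤ γ - (M - γ) |z|` for large `|z|`, once `c` is large the line majorizes `Ψ` on all
of `ℝ`, and its value at `h` is at most `g h`.
-/

open Set Filter

lemma concaveOn_affine (a s x₀ : ℝ) : ConcaveOn ℝ univ fun z => a + s * (z - x₀) :=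
  ((concaveOn_const (a - s * x₀) convex_univ).add
    ((LinearMap.mulLeft ℝ s).concaveOn convex_univ)).congr fun z _ => by
      simp only [Pi.add_apply, LinearMap.mulLeft_apply]
      ring

lemma ConvexOn.add_rightDeriv_mul_sub_le {S : Set ℝ} {f : ℝ → ℝ} {x y : ℝ}
    (hf : ConvexOn ℝ S f) (hx : x ∈ interior S) (hy : y ∈ S) :
    f x + derivWithin f (Ioi x) x * (y - x) ≤ f y := by
  rcases lt_trichotomy y x with hyx | rfl | hxy
  · have hslope := (hf.slope_le_leftDeriv_of_mem_interior hy hx hyx).trans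
      (hf.leftDeriv_le_rightDeriv_of_mem_interior hx)
    rw [slope_def_field, div_le_iff₀ (sub_pos.2 hyx)] at hslope
    linarith
  · simp
  · have hslope := hf.rightDeriv_le_slope_of_mem_interior hx hy hxy
    rw [slope_def_field, le_div_iff₀ (sub_pos.2 hxy)] at hslope
    linarith

lemma ConcaveOn.exists_le_add_mul_sub {S : Set ℝ} {f : ℝ → ℝ} {x : ℝ}
    (hf : ConcaveOn ℝ S f) (hx : x ∈ interior S) :
    ∃ s, ∀ y ∈ S, f y ≤ f x + s * (y - x) :=
  ⟨-derivWithin (-f) (Ioi x) x, fun y hy => by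
    have := hf.neg.add_rightDeriv_mul_sub_le hx hy
    simp only [Pi.neg_apply] at this
    linarith⟩

lemma eventually_le_sub_mul_abs {Ψ : ℝ → ℝ}
    (hdecay : Tendsto (fun z => Ψ z / |z|) (cocompact ℝ) atBot) (γ K : ℝ) :
    ∀ᶠ z in cocompact ℝ, Ψ z ≤ γ - K * |z| := by
  filter_upwards [hdecay.eventually (eventually_le_atBot (-(K + 1))),
    tendsto_norm_cocompact_atTop.eventually (eventually_ge_atTop (max 1 (-γ)))]
    with z hratio habs
  have hpos : 0 < |z| := lt_of_lt_of_le one_pos ((le_max_left _ _).trans habs)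
  rw [div_le_iff₀ hpos] at hratio
  have : -γ ≤ |z| := (le_max_right _ _).trans habs
  linarith

lemma exists_forall_abs_ge_of_eventually_cocompact {P : ℝ → Prop}
    (h : ∀ᶠ z in cocompact ℝ, P z) : ∃ R, ∀ z, R ≤ |z| → P z := by
  rw [← Metric.cobounded_eq_cocompact, ← comap_norm_atTop, eventually_comap,
    eventually_atTop] at h
  obtain ⟨R, hR⟩ := h
  exact ⟨R, fun z hz => hR _ hz z rfl⟩

lemma sub_mul_abs_le_affine {a s x₀ p γ M z : ℝ} (hx₀ : |x₀| + 1 ≤ p) (haM : a ≤ M)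
    (hγM : γ ≤ M) (hl : γ ≤ a + s * (-p - x₀)) (hr : γ ≤ a + s * (p - x₀)) (hz : p ≤ |z|) :
    γ - (M - γ) * |z| ≤ a + s * (z - x₀) := by
  have hslope : |s| ≤ M - γ := by
    rw [abs_le]
    constructor <;> nlinarith [neg_abs_le x₀, le_abs_self x₀]
  rcases le_or_gt 0 z with hz0 | hz0
  · rw [abs_of_nonneg hz0] at hz ⊢
    nlinarith [neg_abs_le s, abs_nonneg x₀]
  · rw [abs_of_neg hz0] at hz ⊢
    nlinarith [le_abs_self s, abs_nonneg x₀]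

def IsConcaveMajorant (S : Set ℝ) (f g : ℝ → ℝ) : Prop :=
  ConcaveOn ℝ S g ∧ ∀ z ∈ S, f z ≤ g z

lemma IsConcaveMajorant.mono {S T : Set ℝ} {f g : ℝ → ℝ} (hST : S ⊆ T) (hS : Convex ℝ S)
    (hg : IsConcaveMajorant T f g) : IsConcaveMajorant S f g :=
  ⟨hg.1.subset hST hS, fun z hz => hg.2 z (hST hz)⟩

lemma lcmaj_le_lcmaj {S T : Set ℝ} {f : ℝ → ℝ} {x : ℝ} (hx : x ∈ T)
    (hS : ∃ g, IsConcaveMajorant S f g)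
    (hST : ∀ g, IsConcaveMajorant S f g → ∃ G, IsConcaveMajorant T f G ∧ G x ≤ g x) :
    lcmaj T f x ≤ lcmaj S f x := by
  obtain ⟨g₀, hg₀c, hg₀m⟩ := hS
  refine le_csInf ⟨g₀ x, g₀, hg₀c, hg₀m, rfl⟩ ?_
  rintro _ ⟨g, hgc, hgm, rfl⟩
  obtain ⟨G, ⟨hGc, hGm⟩, hGg⟩ := hST g ⟨hgc, hgm⟩
  have hbdd : BddBelow {y | ∃ G, ConcaveOn ℝ T G ∧ (∀ z ∈ T, f z ≤ G z) ∧ G x = y} := by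
    refine ⟨f x, ?_⟩
    rintro _ ⟨G', -, hG'm, rfl⟩
    exact hG'm x hx
  exact (csInf_le hbdd ⟨G, hGc, hGm, rfl⟩).trans hGg

lemma exists_isConcaveMajorant_univ_le {Ψ g : ℝ → ℝ} {M γ p c h : ℝ} (hbd : ∀ z, Ψ z ≤ M)
    (hγl : γ ≤ Ψ (-p)) (hγr : γ ≤ Ψ p) (hhp : |h| + 1 ≤ p) (hpc : p < c)
    (htail : ∀ z, c < |z| → Ψ z ≤ γ - (M - γ) * |z|)
    (hg : IsConcaveMajorant (Icc (-c) c) Ψ g) :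
    ∃ G, IsConcaveMajorant univ Ψ G ∧ G h ≤ g h := by
  set g' := fun z => min (g z) M
  have hg' : IsConcaveMajorant (Icc (-c) c) Ψ g' :=
    ⟨hg.1.inf (concaveOn_const M (convex_Icc _ _)), fun z hz => le_min (hg.2 z hz) (hbd z)⟩
  have hhc : h ∈ interior (Icc (-c) c) := by
    rw [interior_Icc]
    exact abs_lt.1 (by linarith)
  obtain ⟨s, hs⟩ := hg'.1.exists_le_add_mul_sub hhc
  refine ⟨fun z => g' h + s * (z - h), ⟨concaveOn_affine _ _ _, fun z _ => ?_⟩, by simp [g']⟩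
  by_cases hzc : |z| ≤ c
  · exact (hg'.2 z (abs_le.1 hzc)).trans (hs z (abs_le.1 hzc))
  have hp : p ∈ Icc (-c) c := ⟨by linarith [abs_nonneg h], hpc.le⟩
  have hnp : -p ∈ Icc (-c) c := ⟨by linarith, by linarith [abs_nonneg h]⟩
  have hγM : γ ≤ M := hγr.trans (hbd p)
  have hg'p : γ ≤ g' p := le_min (hγr.trans (hg.2 p hp)) hγM
  have hg'np : γ ≤ g' (-p) := le_min (hγl.trans (hg.2 _ hnp)) hγM
  exact (htail z (not_le.1 hzc)).trans <| sub_mul_abs_le_affine hhp (min_le_right _ _) hγM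
    (hg'np.trans (hs _ hnp)) (hg'p.trans (hs p hp)) (by linarith)

theorem stmt_2_general (Ψ : ℝ → ℝ) (M : ℝ) (hbd : ∀ h, Ψ h ≤ M)
    (hdecay : Filter.Tendsto (fun h => Ψ h / |h|) (Filter.cocompact ℝ) Filter.atBot) :
    ∀ b > 0, ∃ c₀ > b, ∀ c ≥ c₀, ∀ h : ℝ, |h| ≤ b →
      lcmaj Set.univ Ψ h = lcmaj (Set.Icc (-c) c) Ψ h := by
  intro b _
  set p := b + 1
  set γ := min (Ψ (-p)) (Ψ p)
  obtain ⟨R, hR⟩ :=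
    exists_forall_abs_ge_of_eventually_cocompact (eventually_le_sub_mul_abs hdecay γ (M - γ))
  refine ⟨max p R + 1, by linarith [le_max_left p R], fun c hc h hh => ?_⟩
  have hpc : p < c := by linarith [le_max_left p R]
  have hRc : R < c := by linarith [le_max_right p R]
  have hext (g : ℝ → ℝ) (hg : IsConcaveMajorant (Icc (-c) c) Ψ g) :
      ∃ G, IsConcaveMajorant univ Ψ G ∧ G h ≤ g h :=
    exists_isConcaveMajorant_univ_le hbd (min_le_left _ _) (min_le_right _ _) (by linarith) hpc
      (fun z hz => hR z (by linarith)) hg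
  have hM : IsConcaveMajorant (Icc (-c) c) Ψ fun _ => M :=
    ⟨concaveOn_const M (convex_Icc _ _), fun z _ => hbd z⟩
  obtain ⟨G, hG, -⟩ := hext _ hM
  refine le_antisymm (lcmaj_le_lcmaj (mem_univ h) ⟨_, hM⟩ hext) ?_
  exact lcmaj_le_lcmaj (abs_le.1 (by linarith)) ⟨G, hG⟩ fun g hg =>
    ⟨g, hg.mono (subset_univ _) (convex_Icc _ _), le_rfl⟩

theorem stmt_2 (Ψ : ℝ → ℝ) (M : ℝ) (hM : 0 < M) (hbd : ∀ h, Ψ h ≤ M)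
    (hdecay : Filter.Tendsto (fun h => Ψ h / |h|) (Filter.cocompact ℝ) Filter.atBot) :
    ∀ b > 0, ∃ c₀ > b, ∀ c ≥ c₀, ∀ h : ℝ, |h| ≤ b →
      lcmaj Set.univ Ψ h = lcmaj (Set.Icc (-c) c) Ψ h :=
  stmt_2_general Ψ M hbd hdecay
end

section
/- Convergence of Types (special case): let V, W, and V_n be real random variables and b_n real constants. If V has a nondegenerate distribution, V_n converges in distribution to V, and V_n + b_n converges in distribution to W, then b = lim_{n→∞} b_n exists and W has the same distribution as V + b. -/
open MeasureTheory Filter Topology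

/-- Convergence in distribution of real random variables, via bounded continuous test
functions. -/
def ConvInDist {Ω : Type*} [MeasurableSpace Ω] (P : Measure Ω)
    (V : ℕ → Ω → ℝ) (W : Ω → ℝ) : Prop :=
  ∀ g : BoundedContinuousFunction ℝ ℝ,
    Tendsto (fun n => ∫ ω, g (V n ω) ∂P) atTop (𝓝 (∫ ω, g (W ω) ∂P))

/-!
The shifts `bₙ` are bounded: for large `M` the events `|Vₙ| < M` and `|Vₙ + bₙ| < M` eventually
both have probability `> 1/2` by the portmanteau theorem, so they meet and `|bₙ| < 2M`.
Along a subsequence with `bₙₖ → a`, Slutsky's theorem gives `Vₙₖ + bₙₖ ⇒ V + a`, hence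
`W =ᵈ V + a`. No law on `ℝ` is invariant under a nonzero translation: `μ (· + c) = μ` makes
its distribution function `c`-periodic, which is incompatible with its limits `0` and `1` at
`∓∞` unless `c = 0`. So the bounded sequence `bₙ` has a single cluster point.
-/

open ProbabilityTheory Metric Set

lemma Function.Periodic.eq_zero_of_tendsto_atBot_atTop {β : Type*} [TopologicalSpace β]
    [T2Space β] {f : ℝ → β} {c : ℝ} (hf : Function.Periodic f c) {a b : β} (hab : a ≠ b)
    (ha : Tendsto f atBot (𝓝 a)) (hb : Tendsto f atTop (𝓝 b)) : c = 0 := by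
  by_contra hc
  have hper : Function.Periodic f |c| := by
    rcases abs_choice c with h | h <;> rw [h]
    exacts [hf, hf.neg]
  have hmul : Tendsto (fun n : ℕ => (n : ℝ) * |c|) atTop atTop :=
    tendsto_natCast_atTop_atTop.atTop_mul_const (abs_pos.2 hc)
  have h0b : Tendsto (fun _ : ℕ => f 0) atTop (𝓝 b) :=
    (hb.comp hmul).congr fun n => hper.nat_mul_eq n
  have h0a : Tendsto (fun _ : ℕ => f 0) atTop (𝓝 a) :=
    (ha.comp (tendsto_neg_atTop_atBot.comp hmul)).congr fun n => by
      simpa using hper.sub_nat_mul_eq (x := 0) n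
  exact hab (tendsto_nhds_unique h0a h0b)

lemma eq_zero_of_map_add_const_eq_self {μ : Measure ℝ} [IsProbabilityMeasure μ] {c : ℝ}
    (h : μ.map (· + c) = μ) : c = 0 := by
  have hper : Function.Periodic (cdf μ) c := fun x => by
    rw [cdf_eq_real, cdf_eq_real, ← h,
      map_measureReal_apply (measurable_add_const c) measurableSet_Iic, h, preimage_add_const_Iic,
      add_sub_cancel_right]
  exact hper.eq_zero_of_tendsto_atBot_atTop zero_ne_one (tendsto_cdf_atBot μ) (tendsto_cdf_atTop μ)

lemma eq_of_map_add_const_eq_map_add_const {Ω : Type*} [MeasurableSpace Ω] {P : Measure Ω}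
    [IsProbabilityMeasure P] {Z : Ω → ℝ} (hZ : AEMeasurable Z P) {a b : ℝ}
    (h : P.map (fun ω => Z ω + a) = P.map (fun ω => Z ω + b)) : a = b := by
  have hZb : AEMeasurable (fun ω => Z ω + b) P := hZ.add_const b
  have := Measure.isProbabilityMeasure_map hZb
  refine sub_eq_zero.1 (eq_zero_of_map_add_const_eq_self (μ := P.map (fun ω => Z ω + b)) ?_)
  rw [AEMeasurable.map_map_of_aemeasurable (measurable_add_const _).aemeasurable hZb, ← h]
  congr 1
  ext ω
  simp

lemma ConvInDist.tendstoInDistribution {Ω : Type*} [MeasurableSpace Ω] {P : Measure Ω}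
    [IsProbabilityMeasure P] {X : ℕ → Ω → ℝ} {Z : Ω → ℝ} (h : ConvInDist P X Z)
    (hX : ∀ n, Measurable (X n)) (hZ : Measurable Z) :
    TendstoInDistribution X atTop Z (fun _ => P) P where
  forall_aemeasurable n := (hX n).aemeasurable
  aemeasurable_limit := hZ.aemeasurable
  tendsto := by
    refine ProbabilityMeasure.tendsto_iff_forall_integral_tendsto.2 fun g => ?_
    simp only [ProbabilityMeasure.coe_mk]
    rw [integral_map hZ.aemeasurable g.continuous.aestronglyMeasurable]
    simp_rw [integral_map (hX _).aemeasurable g.continuous.aestronglyMeasurable]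
    exact h g

section TendstoInDistribution

variable {Ω : Type*} [MeasurableSpace Ω] {P : Measure Ω} [IsProbabilityMeasure P]
  {E : Type*} [TopologicalSpace E] [MeasurableSpace E] [OpensMeasurableSpace E] {Z : Ω → E}

lemma MeasureTheory.TendstoInDistribution.comp_tendsto {ι κ : Type*} {X : ι → Ω → E}
    {l : Filter ι} (h : TendstoInDistribution X l Z (fun _ => P) P) {ψ : κ → ι}
    {l' : Filter κ} (hψ : Tendsto ψ l' l) :
    TendstoInDistribution (fun k => X (ψ k)) l' Z (fun _ => P) P where
  forall_aemeasurable k := h.forall_aemeasurable (ψ k)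
  aemeasurable_limit := h.aemeasurable_limit
  tendsto := h.tendsto.comp hψ

lemma MeasureTheory.TendstoInDistribution.eventually_lt_measure_preimage
    [HasOuterApproxClosed E] {X : ℕ → Ω → E} (h : TendstoInDistribution X atTop Z (fun _ => P) P)
    {G : Set E} (hG : IsOpen G) {a : ENNReal} (ha : a < P (Z ⁻¹' G)) :
    ∀ᶠ n in atTop, a < P (X n ⁻¹' G) := by
  have hlim := ProbabilityMeasure.le_liminf_measure_open_of_tendsto h.tendsto hG
  simp only [ProbabilityMeasure.coe_mk] at hlim
  rw [Measure.map_apply_of_aemeasurable h.aemeasurable_limit hG.measurableSet] at hlim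
  simp_rw [Measure.map_apply_of_aemeasurable (h.forall_aemeasurable _) hG.measurableSet] at hlim
  exact eventually_lt_of_lt_liminf (ha.trans_le hlim)

end TendstoInDistribution

lemma eventually_lt_measure_ball {E : Type*} [PseudoMetricSpace E] [MeasurableSpace E]
    (μ : Measure E) (x : E) {a : ENNReal} (ha : a < μ univ) :
    ∀ᶠ n : ℕ in atTop, a < μ (ball x n) := by
  have hmono : Monotone fun n : ℕ => ball x n := fun m n hmn =>
    ball_subset_ball (Nat.cast_le.2 hmn)
  have hlim := tendsto_measure_iUnion_atTop (μ := μ) hmono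
  rw [iUnion_ball_nat] at hlim
  exact hlim.eventually_const_lt ha

section ShiftedConvergence

variable {Ω : Type*} [MeasurableSpace Ω] {P : Measure Ω} [IsProbabilityMeasure P]
  {E : Type*} [MeasurableSpace E] {X : ℕ → Ω → E} {Z W : Ω → E} {c : ℕ → E}

lemma exists_eventually_norm_le_of_tendstoInDistribution_add [SeminormedAddGroup E]
    [OpensMeasurableSpace E]
    (hX : TendstoInDistribution X atTop Z (fun _ => P) P)
    (hXc : TendstoInDistribution (fun n ω => X n ω + c n) atTop W (fun _ => P) P) :
    ∃ C, ∀ᶠ n in atTop, ‖c n‖ ≤ C := by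
  have hhalf : (2⁻¹ : ENNReal) < 1 := ENNReal.inv_lt_one.2 ENNReal.one_lt_two
  obtain ⟨M, hZM, hWM⟩ : ∃ M : ℕ, 2⁻¹ < P (Z ⁻¹' ball 0 M) ∧ 2⁻¹ < P (W ⁻¹' ball 0 M) := by
    have hball {Y : Ω → E} (hY : AEMeasurable Y P) :
        ∀ᶠ n : ℕ in atTop, 2⁻¹ < P (Y ⁻¹' ball 0 n) := by
      have := Measure.isProbabilityMeasure_map hY
      have := eventually_lt_measure_ball (P.map Y) 0 (a := 2⁻¹) (by rwa [measure_univ])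
      simpa [Measure.map_apply_of_aemeasurable hY measurableSet_ball] using this
    exact ((hball hX.aemeasurable_limit).and (hball hXc.aemeasurable_limit)).exists
  refine ⟨2 * M, ?_⟩
  filter_upwards [hX.eventually_lt_measure_preimage isOpen_ball hZM,
    hXc.eventually_lt_measure_preimage isOpen_ball hWM] with n hA hB
  obtain ⟨ω, hωA, hωB⟩ :
      (X n ⁻¹' ball 0 M ∩ (fun ω => X n ω + c n) ⁻¹' ball 0 M).Nonempty := by
    by_contra hAB
    have hunion := measure_union₀ ((hXc.forall_aemeasurable n).nullMeasurable measurableSet_ball)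
      (disjoint_iff_inter_eq_empty.2 (not_nonempty_iff_eq_empty.1 hAB)).aedisjoint
    have := ENNReal.add_lt_add hA hB
    rw [ENNReal.inv_two_add_inv_two, ← hunion] at this
    exact this.not_ge prob_le_one
  rw [mem_preimage, mem_ball_zero_iff] at hωA hωB
  calc ‖c n‖ = ‖-X n ω + (X n ω + c n)‖ := by rw [neg_add_cancel_left]
    _ ≤ ‖-X n ω‖ + ‖X n ω + c n‖ := norm_add_le _ _
    _ ≤ 2 * M := by rw [norm_neg]; linarith

lemma map_eq_map_add_const_of_mapClusterPt [NormedAddCommGroup E] [SecondCountableTopology E]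
    [BorelSpace E]
    (hX : TendstoInDistribution X atTop Z (fun _ => P) P)
    (hXc : TendstoInDistribution (fun n ω => X n ω + c n) atTop W (fun _ => P) P) {b : E}
    (hb : MapClusterPt b atTop c) :
    P.map W = P.map (fun ω => Z ω + b) := by
  obtain ⟨ψ, hψ, hcψ⟩ := hb.tendsto_subseq
  have hconst : TendstoInMeasure P (fun k (_ : Ω) => c (ψ k)) atTop fun _ => b :=
    tendstoInMeasure_of_tendsto_ae (fun _ => aestronglyMeasurable_const) (ae_of_all _ fun _ => hcψ)
  have hZb := (hX.comp_tendsto hψ.tendsto_atTop).add_of_tendstoInMeasure_const hconst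
    fun _ => aemeasurable_const
  exact tendstoInDistribution_unique _ (hXc.comp_tendsto hψ.tendsto_atTop) hZb

end ShiftedConvergence

theorem stmt_4_general {Ω : Type*} [MeasurableSpace Ω] (P : Measure Ω) [IsProbabilityMeasure P]
    (V W : Ω → ℝ) (Vn : ℕ → Ω → ℝ) (bn : ℕ → ℝ)
    (hVmeas : Measurable V) (hWmeas : Measurable W) (hVnmeas : ∀ n, Measurable (Vn n))
    (hVnV : ConvInDist P Vn V)
    (hVnbW : ConvInDist P (fun n ω => Vn n ω + bn n) W) :
    ∃ b : ℝ, Tendsto bn atTop (𝓝 b) ∧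
      P.map W = P.map (fun ω => V ω + b) := by
  have hV := hVnV.tendstoInDistribution hVnmeas hVmeas
  have hW := hVnbW.tendstoInDistribution (fun n => (hVnmeas n).add_const _) hWmeas
  obtain ⟨C, hC⟩ := exists_eventually_norm_le_of_tendstoInDistribution_add hV hW
  have hmem : ∀ᶠ n in atTop, bn n ∈ Icc (-C) C := hC.mono fun _ h => abs_le.1 h
  obtain ⟨b, -, hb⟩ := isCompact_Icc.exists_mapClusterPt (le_principal_iff.2 hmem)
  have hlaw := map_eq_map_add_const_of_mapClusterPt hV hW hb
  refine ⟨b, isCompact_Icc.tendsto_nhds_of_unique_mapClusterPt hmem fun a _ ha => ?_, hlaw⟩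
  exact eq_of_map_add_const_eq_map_add_const hVmeas.aemeasurable
    ((map_eq_map_add_const_of_mapClusterPt hV hW ha).symm.trans hlaw)

/-- Convergence of Types (special case): if `V` is nondegenerate, `Vₙ ⇒ V` and
`Vₙ + bₙ ⇒ W`, then `b = lim bₙ` exists and `W =ᵈ V + b`. -/
theorem stmt_4 {Ω : Type*} [MeasurableSpace Ω] (P : Measure Ω) [IsProbabilityMeasure P]
    (V W : Ω → ℝ) (Vn : ℕ → Ω → ℝ) (bn : ℕ → ℝ)
    (hVmeas : Measurable V) (hWmeas : Measurable W) (hVnmeas : ∀ n, Measurable (Vn n))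
    (hnondeg : ∀ c : ℝ, P.map V ≠ Measure.dirac c)
    (hVnV : ConvInDist P Vn V)
    (hVnbW : ConvInDist P (fun n ω => Vn n ω + bn n) W) :
    ∃ b : ℝ, Tendsto bn atTop (𝓝 b) ∧
      P.map W = P.map (fun ω => V ω + b) :=
  stmt_4_general P V W Vn bn hVmeas hWmeas hVnmeas hVnV hVnbW
end

section
/- Suppose for all n, h_n : ℝ → ℝ and h : ℝ → ℝ are functions with h concave, and h_n → h uniformly on every compact set. Suppose further that there are compacts K_n ⊇ J (J a fixed compact interval), with K_n = K a fixed compact for all sufficiently large n, such that L_{K_n} h_n = L_{I_n} h_n on J for intervals I_n ⊇ K_n. If h_n → h uniformly on K, then L_{I_n} h_n → L_K h = h uniformly on J. -/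
open Filter

lemma lcmaj_bddBelow (S : Set ℝ) (f : ℝ → ℝ) (x : ℝ) (hx : x ∈ S) :
    BddBelow {y : ℝ | ∃ g : ℝ → ℝ, ConcaveOn ℝ S g ∧ (∀ z ∈ S, f z ≤ g z) ∧ g x = y} := by
  refine ⟨f x, ?_⟩
  rintro y ⟨g, hg, hmaj, rfl⟩
  exact hmaj x hx

lemma lcmaj_le_shift (S : Set ℝ) (f1 f2 : ℝ → ℝ) (c : ℝ) (x : ℝ) (hx : x ∈ S)
    (hle : ∀ z ∈ S, f1 z ≤ f2 z + c)
    (g2 : ℝ → ℝ) (hg2 : ConcaveOn ℝ S g2) (hg2maj : ∀ z ∈ S, f2 z ≤ g2 z) :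
    lcmaj S f1 x ≤ lcmaj S f2 x + c := by
  have key : lcmaj S f1 x - c ≤ lcmaj S f2 x := by
    refine le_csInf ⟨g2 x, g2, hg2, hg2maj, rfl⟩ ?_
    rintro y ⟨g, hg, hmaj, rfl⟩
    have h1 : lcmaj S f1 x ≤ g x + c := by
      apply csInf_le (lcmaj_bddBelow S f1 x hx)
      exact ⟨fun z => g z + c, hg.add_const c, fun z hz => (hle z hz).trans
        (by simpa using add_le_add_right (hmaj z hz) c), rfl⟩
    linarith
  linarith

lemma lcmaj_concave_eq (S : Set ℝ) (f : ℝ → ℝ) (hf : ConcaveOn ℝ S f) (x : ℝ) (hx : x ∈ S) :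
    lcmaj S f x = f x := by
  apply le_antisymm
  · exact csInf_le (lcmaj_bddBelow S f x hx) ⟨f, hf, fun z _ => le_refl _, rfl⟩
  · refine le_csInf ⟨f x, f, hf, fun z _ => le_refl _, rfl⟩ ?_
    rintro y ⟨g, hg, hmaj, rfl⟩
    exact hmaj x hx

theorem stmt_11 (hn : ℕ → ℝ → ℝ) (h : ℝ → ℝ) (hconc : ConcaveOn ℝ Set.univ h)
    (hunif : ∀ s : Set ℝ, IsCompact s → TendstoUniformlyOn (fun n => hn n) h atTop s)
    (a b A B : ℝ) (hab : a ≤ b) (hJK : Set.Icc a b ⊆ Set.Icc A B)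
    (I : ℕ → Set ℝ) (hIconv : ∀ n, Convex ℝ (I n)) (hKI : ∀ n, Set.Icc A B ⊆ I n)
    (hloc : ∀ᶠ n in atTop, ∀ x ∈ Set.Icc a b,
      lcmaj (I n) (hn n) x = lcmaj (Set.Icc A B) (hn n) x) :
    TendstoUniformlyOn (fun n x => lcmaj (I n) (hn n) x) h atTop (Set.Icc a b) := by
  set K := Set.Icc A B
  have hconcK : ConcaveOn ℝ K h := hconc.subset (Set.subset_univ _) (convex_Icc A B)
  rw [Metric.tendstoUniformlyOn_iff]
  intro ε hε
  have hεhalf : 0 < ε / 2 := by linarith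
  have hK := (Metric.tendstoUniformlyOn_iff.mp (hunif K isCompact_Icc)) (ε / 2) hεhalf
  filter_upwards [hloc, hK] with n hlocn hKn
  intro x hx
  have hxK : x ∈ K := hJK hx
  rw [hlocn x hx]
  -- bounds: ∀ z ∈ K, |h z - hn n z| < ε/2
  have hb1 : ∀ z ∈ K, hn n z ≤ h z + ε / 2 := fun z hz => by
    have := hKn z hz; rw [Real.dist_eq, abs_lt] at this; linarith [this.1]
  have hb2 : ∀ z ∈ K, h z ≤ hn n z + ε / 2 := fun z hz => by
    have := hKn z hz; rw [Real.dist_eq, abs_lt] at this; linarith [this.2]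
  have h1 : lcmaj K (hn n) x ≤ lcmaj K h x + ε / 2 :=
    lcmaj_le_shift K (hn n) h (ε / 2) x hxK hb1 h hconcK (fun z _ => le_refl _)
  have h2 : lcmaj K h x ≤ lcmaj K (hn n) x + ε / 2 :=
    lcmaj_le_shift K h (hn n) (ε / 2) x hxK hb2
      (fun z => h z + ε / 2) (hconcK.add_const _) hb1
  rw [lcmaj_concave_eq K h hconcK x hxK] at h1 h2
  rw [Real.dist_eq, abs_lt]
  constructor <;> linarith
end

section
/- Let X₁, X₂, … be i.i.d. real random variables on a probability space, and suppose T is a real random variable measurable with respect to the exchangeable (finite-permutation-invariant) events of the sequence, i.e., T is almost surely invariant under every finite permutation of the coordinates. Then T is almost surely constant. -/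
/-!
Approximate an exchangeable event `E` of the sequence by a cylinder `C` depending on the first
`n` coordinates only. The finite permutation exchanging the blocks `[0, n)` and `[n, 2n)` fixes
`E` up to a null set and preserves the law of the i.i.d. sequence, but carries `C` to a cylinder
independent of `C`. So `E` is approximated by two independent events, whence `P E = (P E)²`.
A real random variable all of whose events `{T ∈ U}` have probability `0` or `1` is a.s. constant,
since countably many Borel sets separate the points of `ℝ`.
-/

open MeasureTheory ProbabilityTheory Set Filter
open scoped symmDiff

section ApproxIndep

variable {α : Type*} [MeasurableSpace α] {m : Measure α} [IsProbabilityMeasure m]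

theorem measure_eq_zero_or_one_of_forall_approx_indep {A : Set α} (hA : MeasurableSet A)
    (h : ∀ ε > 0, ∃ B₁ B₂, MeasurableSet B₁ ∧ MeasurableSet B₂ ∧ m (B₁ ∩ B₂) = m B₁ * m B₂ ∧
      m.real (B₁ ∆ A) < ε ∧ m.real (B₂ ∆ A) < ε) :
    m A = 0 ∨ m A = 1 := by
  suffices hidem : m.real A * m.real A = m.real A by
    have : m.real A * (m.real A - 1) = 0 := by linarith
    rcases mul_eq_zero.1 this with h0 | h1
    · exact .inl ((measureReal_eq_zero_iff).1 h0)
    · exact .inr ((ENNReal.toReal_eq_one_iff _).1 (sub_eq_zero.1 h1))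
  refine eq_of_forall_dist_le fun ε hε => ?_
  obtain ⟨B₁, B₂, hB₁, hB₂, hindep, h₁, h₂⟩ := h (ε / 4) (by positivity)
  have hprod : m.real (B₁ ∩ B₂) = m.real B₁ * m.real B₂ := by
    simp only [measureReal_def, hindep, ENNReal.toReal_mul]
  have hsub : (B₁ ∩ B₂) ∆ A ⊆ B₁ ∆ A ∪ B₂ ∆ A := fun x hx => by
    simp only [mem_symmDiff, mem_inter_iff, mem_union] at hx ⊢
    tauto
  have h₁₂ : m.real ((B₁ ∩ B₂) ∆ A) < ε / 2 := by
    calc m.real ((B₁ ∩ B₂) ∆ A) ≤ m.real (B₁ ∆ A ∪ B₂ ∆ A) := measureReal_mono hsub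
      _ ≤ m.real (B₁ ∆ A) + m.real (B₂ ∆ A) := measureReal_union_le _ _
      _ < ε / 2 := by linarith
  have d₁ := (abs_measureReal_sub_le_measureReal_symmDiff hB₁.nullMeasurableSet
    hA.nullMeasurableSet).trans_lt h₁
  have d₂ := (abs_measureReal_sub_le_measureReal_symmDiff hB₂.nullMeasurableSet
    hA.nullMeasurableSet).trans_lt h₂
  have d₁₂ := (abs_measureReal_sub_le_measureReal_symmDiff (hB₁.inter hB₂).nullMeasurableSet
    hA.nullMeasurableSet).trans_lt h₁₂
  rw [hprod] at d₁₂
  have ha₀ : 0 ≤ m.real A := measureReal_nonneg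
  have ha₁ : m.real A ≤ 1 := measureReal_le_one
  have hb₀ : 0 ≤ m.real B₂ := measureReal_nonneg
  have hb₁ : m.real B₂ ≤ 1 := measureReal_le_one
  rw [abs_lt] at d₁ d₂ d₁₂
  -- `a² - a = a (a - b₂) + b₂ (a - b₁) + (b₁ b₂ - a)`, each term small
  rw [Real.dist_eq, abs_le]
  constructor <;> nlinarith

end ApproxIndep

section BlockSwap

def blockSwap (n : ℕ) : Equiv.Perm ℕ :=
  Function.Involutive.toPerm (fun i => if i < n then i + n else if i < 2 * n then i - n else i)
    fun i => by dsimp only; split_ifs <;> omega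

theorem blockSwap_apply (n i : ℕ) :
    blockSwap n i = if i < n then i + n else if i < 2 * n then i - n else i :=
  rfl

theorem blockSwap_apply_of_lt {n i : ℕ} (h : i < n) : blockSwap n i = i + n := by
  simp [blockSwap_apply, h]

theorem blockSwap_apply_of_le {n i : ℕ} (h : 2 * n ≤ i) : blockSwap n i = i := by
  simp [blockSwap_apply, show ¬ i < n by omega, show ¬ i < 2 * n by omega]

theorem finite_blockSwap_ne (n : ℕ) : {i | blockSwap n i ≠ i}.Finite :=
  (finite_Iio (2 * n)).subset fun i hi => by
    by_contra h
    exact hi (blockSwap_apply_of_le (not_lt.1 h))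

theorem disjoint_image_blockSwap {n : ℕ} {s : Finset ℕ} (hs : ∀ i ∈ s, i < n) :
    Disjoint s (s.image (blockSwap n)) := by
  rw [Finset.disjoint_right]
  rintro _ hj hj'
  obtain ⟨i, hi, rfl⟩ := Finset.mem_image.1 hj
  have := hs _ hj'
  rw [blockSwap_apply_of_lt (hs i hi)] at this
  omega

end BlockSwap

section IID

variable {Ω ι β : Type*} [MeasurableSpace Ω] [MeasurableSpace β] {P : Measure Ω}
  {X : ι → Ω → β}

theorem ProbabilityTheory.iIndepFun.indepFun_restrict_comp [DecidableEq ι] (h : iIndepFun X P)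
    (hX : ∀ i, Measurable (X i)) {s : Finset ι} {g : ι → ι} (hg : Disjoint s (s.image g)) :
    IndepFun (fun ω (i : s) => X i ω) (fun ω (i : s) => X (g i) ω) P := by
  have hrestrict : Measurable fun (y : s.image g → β) (i : s) =>
      y ⟨g i, Finset.mem_image_of_mem g i.2⟩ :=
    measurable_pi_lambda _ fun _ => measurable_pi_apply _
  exact (h.indepFun_finset s (s.image g) hg hX).comp measurable_id hrestrict

theorem ProbabilityTheory.iIndepFun.map_precomp_eq_map {μ : Measure β} (h : iIndepFun X P)
    (hX : ∀ i, Measurable (X i)) (hident : ∀ i, P.map (X i) = μ) {g : ι → ι} (hg : g.Injective) :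
    P.map (fun ω i => X (g i) ω) = P.map (fun ω i => X i ω) := by
  rw [(h.precomp hg).map_fun_eq_infinitePi_map (fun i => hX (g i)),
    h.map_fun_eq_infinitePi_map hX]
  simp only [hident]

end IID

section Exchangeable

variable {Ω β : Type*} [MeasurableSpace Ω] [MeasurableSpace β] {P : Measure Ω}
  [IsProbabilityMeasure P] {X : ℕ → Ω → β}

theorem measure_preimage_eq_zero_or_one_of_exchangeable (hX : ∀ i, Measurable (X i))
    (hindep : iIndepFun X P) {μ : Measure β} (hident : ∀ i, P.map (X i) = μ)
    {E : Set (ℕ → β)} (hE : MeasurableSet E)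
    (hinv : ∀ σ : Equiv.Perm ℕ, {i | σ i ≠ i}.Finite →
      (fun ω i => X (σ i) ω) ⁻¹' E =ᵐ[P] (fun ω i => X i ω) ⁻¹' E) :
    P ((fun ω i => X i ω) ⁻¹' E) = 0 ∨ P ((fun ω i => X i ω) ⁻¹' E) = 1 := by
  set Y : Ω → ℕ → β := fun ω i => X i ω
  have hY : Measurable Y := measurable_pi_lambda _ hX
  refine measure_eq_zero_or_one_of_forall_approx_indep (hY hE) fun ε hε => ?_
  obtain ⟨C, hC, hCE⟩ := exists_measure_symmDiff_lt_of_generateFrom_isSetRing (μ := P.map Y)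
    isSetRing_measurableCylinders
    ⟨{univ}, countable_singleton _,
      by simpa using univ_mem_measurableCylinders (fun _ : ℕ => β), by simp⟩
    generateFrom_measurableCylinders.symm hE (ENNReal.ofReal_pos.2 hε)
  obtain ⟨s, S, hS, rfl⟩ := (mem_measurableCylinders C).1 hC
  obtain ⟨n, hn⟩ : ∃ n, ∀ i ∈ s, i < n :=
    ⟨s.sup id + 1, fun i hi => Nat.lt_succ_of_le (Finset.le_sup (f := id) hi)⟩
  set Yσ : Ω → ℕ → β := fun ω i => X (blockSwap n i) ω
  have hYσ : Measurable Yσ := measurable_pi_lambda _ fun i => hX _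
  have hlaw : P.map Yσ = P.map Y :=
    hindep.map_precomp_eq_map hX hident (blockSwap n).injective
  have hCE' : (P.map Y).real (cylinder s S ∆ E) < ε := ENNReal.toReal_lt_of_lt_ofReal hCE
  have hCEm : MeasurableSet (cylinder s S ∆ E) := hS.cylinder.symmDiff hE
  refine ⟨Y ⁻¹' cylinder s S, Yσ ⁻¹' cylinder s S, hY hS.cylinder, hYσ hS.cylinder,
    (hindep.indepFun_restrict_comp hX (disjoint_image_blockSwap hn)).measure_inter_preimage_eq_mul
      S S hS hS, ?_, ?_⟩
  · rwa [← preimage_symmDiff, ← map_measureReal_apply hY hCEm]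
  · rw [measureReal_congr (EventuallyEq.rfl.symmDiff (hinv _ (finite_blockSwap_ne n)).symm),
      ← preimage_symmDiff, ← map_measureReal_apply hYσ hCEm, hlaw]
    exact hCE'

end Exchangeable

/-- Hewitt–Savage: a random variable that is a (measurable) function of an i.i.d. sequence
and is a.s. invariant under every finite permutation of the coordinates is a.s. constant. -/
theorem stmt_15 {Ω : Type*} [MeasurableSpace Ω] (P : Measure Ω) [IsProbabilityMeasure P]
    (X : ℕ → Ω → ℝ) (hmeas : ∀ i, Measurable (X i)) (μ : Measure ℝ)
    (hindep : ProbabilityTheory.iIndepFun X P)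
    (hident : ∀ i, P.map (X i) = μ)
    (φ : (ℕ → ℝ) → ℝ) (hφ : Measurable φ)
    (hperm : ∀ σ : Equiv.Perm ℕ, {i | σ i ≠ i}.Finite →
      (fun ω => φ (fun i => X (σ i) ω)) =ᵐ[P] fun ω => φ (fun i => X i ω)) :
    ∃ c : ℝ, (fun ω => φ (fun i => X i ω)) =ᵐ[P] fun _ => c := by
  refine exists_eventuallyEq_const_of_forall_separating MeasurableSet fun U hU => ?_
  have hT : Measurable fun ω => φ (fun i => X i ω) := hφ.comp (measurable_pi_lambda _ hmeas)
  rcases measure_preimage_eq_zero_or_one_of_exchangeable hmeas hindep hident (hφ hU)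
    (fun σ hσ => (hperm σ hσ).preimage U) with h0 | h1
  · exact .inr (measure_eq_zero_iff_ae_notMem.1 h0)
  · exact .inl (mem_ae_iff.2 ((prob_compl_eq_zero_iff (hT hU)).2 h1))
end

section
/- Let (Y_n) and (Z_n) be real random variables on a common probability space, let K_n(ω,·) and L_n(ω,·) be regular conditional distribution functions of Y_n + Z_n and Z_n given a σ-field 𝒢 (with Y_n 𝒢-measurable), and let d be the Lévy metric. Suppose there exist distribution functions K and L with L nondegenerate such that d(K_n, K) → 0 in probability and d(L_n, L) → 0 in probability. Then there exists a random variable Y such that Y_n → Y in probability. -/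
open MeasureTheory Filter Topology ProbabilityTheory Set Metric

/-! Since `Yₙ` is `𝒢`-measurable, the conditional law of `Yₙ + Zₙ` at `ω` is almost surely the
conditional law of `Zₙ` translated by `Yₙ ω`. Translations are isometries for the Lévy–Prokhorov
distance, so whenever the conditional laws at `(n, ω)` and at `(m, ω')` are both `δ`-close to `K`
and `L`, the translate of `L` by `Yₙ ω - Yₘ ω'` is `4δ`-close to `L`. A probability measure on `ℝ`
is close to its translate only for small shifts: a shift by at least `η` that is `δ`-close gives
`F x ≤ F (x - η/2) + δ` for its CDF `F`, and `k` iterations of this from a point where `F > 1/2`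
contradict `F → 0` at `-∞` once `kδ ≤ 1/4`. Hence, off events of small probability, all values
of all `Yₙ` lie within a small distance of each other; they form a Cauchy family whose limit `c`
satisfies `Yₙ → c` in probability. -/

lemma IsometryEquiv.preimage_thickening {X Y : Type*} [PseudoEMetricSpace X] [PseudoEMetricSpace Y]
    (e : X ≃ᵢ Y) (r : ℝ) (s : Set Y) : e ⁻¹' thickening r s = thickening r (e ⁻¹' s) := by
  ext x
  rw [mem_preimage, mem_thickening_iff_infEDist_lt, mem_thickening_iff_infEDist_lt, ← e.image_symm,
    ← Metric.infEDist_image e.symm.isometry, e.symm_apply_apply]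

section LevyProkhorov

variable {X Y : Type*} [PseudoEMetricSpace X] [MeasurableSpace X] [BorelSpace X]
  [PseudoEMetricSpace Y] [MeasurableSpace Y] [BorelSpace Y]

lemma levyProkhorovEDist_map_isometryEquiv_le (e : X ≃ᵢ Y) (μ ν : Measure X) :
    levyProkhorovEDist (μ.map e) (ν.map e) ≤ levyProkhorovEDist μ ν := by
  refine levyProkhorovEDist_le_of_forall _ _ _ fun ε B hε _ hB => ?_
  have he := e.continuous.measurable
  have hthick : MeasurableSet (thickening ε.toReal B) := isOpen_thickening.measurableSet
  simp only [Measure.map_apply he hB, Measure.map_apply he hthick, e.preimage_thickening]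
  exact ⟨left_measure_le_of_levyProkhorovEDist_lt hε (he hB),
    right_measure_le_of_levyProkhorovEDist_lt hε (he hB)⟩

lemma levyProkhorovEDist_map_isometryEquiv (e : X ≃ᵢ Y) (μ ν : Measure X) :
    levyProkhorovEDist (μ.map e) (ν.map e) = levyProkhorovEDist μ ν := by
  refine le_antisymm (levyProkhorovEDist_map_isometryEquiv_le e μ ν) ?_
  have h := levyProkhorovEDist_map_isometryEquiv_le e.symm (μ.map e) (ν.map e)
  have he := e.continuous.measurable
  have he' := e.symm.continuous.measurable
  rwa [Measure.map_map he' he, Measure.map_map he' he, e.symm_comp_self, Measure.map_id,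
    Measure.map_id] at h

lemma levyProkhorovDist_map_isometryEquiv (e : X ≃ᵢ Y) (μ ν : Measure X) :
    levyProkhorovDist (μ.map e) (ν.map e) = levyProkhorovDist μ ν := by
  simp only [levyProkhorovDist, levyProkhorovEDist_map_isometryEquiv]

end LevyProkhorov

section Translation

variable {E : Type*} [SeminormedAddCommGroup E] [MeasurableSpace E] [BorelSpace E]

lemma levyProkhorovDist_map_add_left (c : E) (μ ν : Measure E) :
    levyProkhorovDist (μ.map (c + ·)) (ν.map (c + ·)) = levyProkhorovDist μ ν :=
  levyProkhorovDist_map_isometryEquiv (IsometryEquiv.addLeft c) μ ν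

lemma levyProkhorovDist_map_sub_add_le (K L μ μ' : Measure E) [IsFiniteMeasure K]
    [IsFiniteMeasure L] [IsFiniteMeasure μ] [IsFiniteMeasure μ'] (a b : E) :
    levyProkhorovDist (L.map ((a - b) + ·)) L ≤ levyProkhorovDist (μ.map (a + ·)) K
      + levyProkhorovDist μ L + levyProkhorovDist (μ'.map (b + ·)) K + levyProkhorovDist μ' L := by
  have hL : levyProkhorovDist (L.map ((a - b) + ·)) L
      = levyProkhorovDist (L.map (a + ·)) (L.map (b + ·)) := by
    rw [← levyProkhorovDist_map_add_left b, Measure.map_map (measurable_const_add b)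
      (measurable_const_add _)]
    congr 2
    ext x
    simp only [Function.comp_apply]
    abel
  rw [hL]
  calc levyProkhorovDist (L.map (a + ·)) (L.map (b + ·))
      ≤ levyProkhorovDist (L.map (a + ·)) (μ.map (a + ·)) + levyProkhorovDist (μ.map (a + ·)) K
        + levyProkhorovDist K (μ'.map (b + ·))
        + levyProkhorovDist (μ'.map (b + ·)) (L.map (b + ·)) := by
        linarith [levyProkhorovDist_triangle (L.map (a + ·)) (μ.map (a + ·)) (L.map (b + ·)),
          levyProkhorovDist_triangle (μ.map (a + ·)) K (L.map (b + ·)),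
          levyProkhorovDist_triangle K (μ'.map (b + ·)) (L.map (b + ·))]
    _ = _ := by
        rw [levyProkhorovDist_map_add_left, levyProkhorovDist_map_add_left,
          levyProkhorovDist_comm L, levyProkhorovDist_comm K]
        ring

end Translation

lemma thickening_Iic_subset (r x : ℝ) : thickening r (Iic x) ⊆ Iic (x + r) := by
  intro y hy
  obtain ⟨z, hz, hyz⟩ := mem_thickening_iff.mp hy
  rw [Real.dist_eq, abs_sub_lt_iff] at hyz
  exact mem_Iic.mpr (by linarith [mem_Iic.mp hz])

lemma cdf_le_cdf_sub_abs_add_of_levyProkhorovDist_lt (L : Measure ℝ) [IsProbabilityMeasure L]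
    {a δ : ℝ} (h : levyProkhorovDist (L.map (a + ·)) L < δ) (x : ℝ) :
    cdf L x ≤ cdf L (x - |a| + δ) + δ := by
  have hδ : 0 ≤ δ := ENNReal.toReal_nonneg.trans h.le
  have hlt : levyProkhorovEDist (L.map (a + ·)) L < ENNReal.ofReal δ := by
    rwa [← ENNReal.ofReal_toReal (levyProkhorovEDist_ne_top _ _),
      ENNReal.ofReal_lt_ofReal_iff_of_nonneg ENNReal.toReal_nonneg]
  have hmap (y : ℝ) : L.map (a + ·) (Iic y) = L (Iic (y - a)) := by
    rw [Measure.map_apply (measurable_const_add a) measurableSet_Iic]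
    congr 1
    ext z
    simp [le_sub_iff_add_le']
  suffices L (Iic x) ≤ L (Iic (x - |a| + δ)) + ENNReal.ofReal δ by
    rwa [← ofReal_cdf, ← ofReal_cdf, ← ENNReal.ofReal_add (cdf_nonneg _ _) hδ,
      ENNReal.ofReal_le_ofReal_iff (by positivity [cdf_nonneg L (x - |a| + δ)])] at this
  rcases le_or_gt 0 a with ha | ha
  · calc L (Iic x) ≤ L.map (a + ·) (thickening δ (Iic x)) + ENNReal.ofReal δ := by
          simpa [ENNReal.toReal_ofReal hδ] using
            right_measure_le_of_levyProkhorovEDist_lt hlt measurableSet_Iic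
      _ ≤ L.map (a + ·) (Iic (x + δ)) + ENNReal.ofReal δ := by
          gcongr; exact thickening_Iic_subset δ x
      _ = L (Iic (x - |a| + δ)) + ENNReal.ofReal δ := by rw [hmap, abs_of_nonneg ha]; ring_nf
  · calc L (Iic x) = L.map (a + ·) (Iic (x + a)) := by rw [hmap, add_sub_cancel_right]
      _ ≤ L (thickening δ (Iic (x + a))) + ENNReal.ofReal δ := by
          simpa [ENNReal.toReal_ofReal hδ] using
            left_measure_le_of_levyProkhorovEDist_lt hlt measurableSet_Iic
      _ ≤ L (Iic (x - |a| + δ)) + ENNReal.ofReal δ := by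
          gcongr
          exact (thickening_Iic_subset δ _).trans
            (Iic_subset_Iic.mpr (by rw [abs_of_neg ha]; linarith))

lemma le_sub_mul_add_mul_of_forall_le_sub_add {F : ℝ → ℝ} {h c : ℝ}
    (hF : ∀ x, F x ≤ F (x - h) + c) (x : ℝ) (k : ℕ) : F x ≤ F (x - k * h) + k * c := by
  induction k with
  | zero => simp
  | succ k ih =>
    calc F x ≤ F (x - k * h - h) + c + k * c := by linarith [hF (x - k * h)]
      _ = F (x - (k + 1 : ℕ) * h) + (k + 1 : ℕ) * c := by push_cast; ring_nf

lemma exists_pos_abs_lt_of_levyProkhorovDist_map_add_lt (L : Measure ℝ) [IsProbabilityMeasure L]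
    {η : ℝ} (hη : 0 < η) :
    ∃ δ > 0, ∀ a : ℝ, levyProkhorovDist (L.map (a + ·)) L < δ → |a| < η := by
  obtain ⟨x₀, hx₀⟩ :=
    ((tendsto_cdf_atTop L).eventually_const_lt (by norm_num : (1 / 2 : ℝ) < 1)).exists
  have hdown : Tendsto (fun k : ℕ => x₀ - k * (η / 2)) atTop atBot := by
    simpa only [sub_eq_add_neg, Function.comp_def] using tendsto_atBot_add_const_left _ x₀
      (tendsto_neg_atTop_atBot.comp (tendsto_natCast_atTop_atTop.atTop_mul_const (half_pos hη)))
  obtain ⟨k, hk⟩ := (((tendsto_cdf_atBot L).comp hdown).eventually_lt_const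
    (by norm_num : (0 : ℝ) < 1 / 4)).exists
  refine ⟨min (η / 2) (1 / (4 * (k + 1))), by positivity, fun a ha => ?_⟩
  by_contra! hηa
  set δ := min (η / 2) (1 / (4 * (k + 1)))
  have hstep (x : ℝ) : cdf L x ≤ cdf L (x - η / 2) + δ :=
    (cdf_le_cdf_sub_abs_add_of_levyProkhorovDist_lt L ha x).trans
      (by gcongr; linarith [min_le_left (η / 2) (1 / (4 * (k + 1)))])
  have hkδ : k * δ ≤ 1 / 4 := by
    have h1 : δ * (4 * (k + 1)) ≤ 1 := (le_div_iff₀ (by positivity)).mp (min_le_right _ _)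
    linarith [show 0 < δ by positivity]
  linarith [le_sub_mul_add_mul_of_forall_le_sub_add hstep x₀ k,
    show cdf L (x₀ - k * (η / 2)) < 1 / 4 from hk]

section CondExpKernel

variable {Ω β : Type*} {m mΩ : MeasurableSpace Ω} [StandardBorelSpace Ω] {μ : Measure Ω}
  [IsFiniteMeasure μ]

lemma ae_ae_condExpKernel_eq_of_measurable [MeasurableSpace β] [MeasurableEq β] (hm : m ≤ mΩ)
    {f : Ω → β} (hf : Measurable[m] f) :
    ∀ᵐ ω ∂μ, ∀ᵐ ω' ∂(condExpKernel μ m ω), f ω' = f ω := by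
  refine ae_of_ae_trim hm (Measure.ae_ae_of_ae_compProd (p := fun p => f p.2 = f p.1) ?_)
  rw [compProd_trim_condExpKernel hm, ae_map_iff]
  · exact ae_of_all _ fun ω => rfl
  · exact @Measurable.aemeasurable _ _ _ (m.prod mΩ) _ _
      ((measurable_id'' hm).prodMk measurable_id)
  · exact measurableSet_eq_fun ((hf.mono hm le_rfl).comp measurable_snd) (hf.comp measurable_fst)

lemma ae_map_condExpKernel_eq_map_map {γ δ : Type*} [MeasurableSpace β] [MeasurableEq β]
    [MeasurableSpace γ] [MeasurableSpace δ] (hm : m ≤ mΩ) {Y : Ω → β} {Z : Ω → γ}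
    {g : β → γ → δ} (hY : Measurable[m] Y) (hZ : Measurable Z)
    (hg : Measurable (Function.uncurry g)) :
    ∀ᵐ ω ∂μ, (condExpKernel μ m ω).map (fun ω' => g (Y ω') (Z ω'))
      = ((condExpKernel μ m ω).map Z).map (g (Y ω)) := by
  filter_upwards [ae_ae_condExpKernel_eq_of_measurable hm hY] with ω hω
  rw [Measure.map_map hg.of_uncurry_left hZ]
  exact Measure.map_congr (hω.mono fun ω' h => by simp [h])

end CondExpKernel

lemma exists_tendstoInMeasure_const_of_forall_exists_dist_lt {Ω E : Type*}
    {mΩ : MeasurableSpace Ω} [PseudoMetricSpace E] [CompleteSpace E] {μ : Measure Ω} [NeZero μ]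
    {f : ℕ → Ω → E}
    (h : ∀ η > 0, ∃ G : ℕ → Set Ω, Tendsto (fun n => μ (G n)ᶜ) atTop (𝓝 0) ∧
      ∀ n m, ∀ ω ∈ G n, ∀ ω' ∈ G m, dist (f n ω) (f m ω') < η) :
    ∃ c, TendstoInMeasure μ f atTop fun _ => c := by
  choose G hGc hGf using fun k : ℕ => h (1 / (k + 1)) (by positivity)
  have hmeet (j k : ℕ) : ∃ n, (G j n ∩ G k n).Nonempty := by
    obtain ⟨n, hn⟩ := (((hGc j).add (hGc k)).eventually_lt_const
      (show 0 + 0 < μ univ by simp [NeZero.ne μ])).exists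
    refine ⟨n, nonempty_iff_ne_empty.mpr fun hempty => hn.not_ge ?_⟩
    calc μ univ = μ ((G j n)ᶜ ∪ (G k n)ᶜ) := by rw [← compl_inter, hempty, compl_empty]
      _ ≤ μ (G j n)ᶜ + μ (G k n)ᶜ := measure_union_le _ _
  choose n ω hω using fun k => hmeet k k
  set v : ℕ → E := fun k => f (n k) (ω k)
  have hv (j k : ℕ) : dist (v j) (v k) < 1 / (j + 1) + 1 / (k + 1) := by
    obtain ⟨N, ω', hj, hk⟩ := hmeet j k
    linarith [dist_triangle (v j) (f N ω') (v k), hGf j (n j) N (ω j) (hω j).1 ω' hj,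
      hGf k N (n k) ω' hk (ω k) (hω k).1]
  have hcauchy : CauchySeq v := by
    refine cauchySeq_of_le_tendsto_0 (fun N : ℕ => 2 * (1 / ((N : ℝ) + 1)))
      (fun j k N hj hk => ?_) ?_
    · linarith [hv j k, Nat.one_div_le_one_div (α := ℝ) hj, Nat.one_div_le_one_div (α := ℝ) hk]
    · simpa using tendsto_one_div_add_atTop_nhds_zero_nat.const_mul (2 : ℝ)
  obtain ⟨c, hc⟩ := cauchySeq_tendsto_of_complete hcauchy
  have hvc (k : ℕ) : dist (v k) c ≤ 1 / (k + 1) := by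
    simpa using le_of_tendsto_of_tendsto' (tendsto_const_nhds.dist hc)
      (tendsto_const_nhds.add tendsto_one_div_add_atTop_nhds_zero_nat) fun m => (hv k m).le
  refine ⟨c, tendstoInMeasure_iff_dist.mpr fun ε hε => ?_⟩
  obtain ⟨k, hk⟩ := exists_nat_one_div_lt (half_pos hε)
  refine tendsto_of_tendsto_of_tendsto_of_le_of_le tendsto_const_nhds (hGc k) (fun _ => zero_le)
    fun m => measure_mono fun x (hx : ε ≤ dist (f m x) c) hxG => hx.not_gt ?_
  linarith [dist_triangle (f m x) (v k) c, hGf k m (n k) x hxG (ω k) (hω k).1, hvc k]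

lemma exists_tendstoInMeasure_const_of_map_add_eq {Ω : Type*} {mΩ : MeasurableSpace Ω}
    {P : Measure Ω} [IsProbabilityMeasure P] (K L : Measure ℝ) [IsFiniteMeasure K]
    [IsProbabilityMeasure L] {Y : ℕ → Ω → ℝ} {μ ν : ℕ → Ω → Measure ℝ}
    (hμ_finite : ∀ n ω, IsFiniteMeasure (μ n ω))
    (hshift : ∀ᵐ ω ∂P, ∀ n, ν n ω = (μ n ω).map (Y n ω + ·))
    (hν : ∀ ε > (0 : ℝ), Tendsto (fun n => P {ω | ε < levyProkhorovDist (ν n ω) K}) atTop (𝓝 0))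
    (hμ : ∀ ε > (0 : ℝ), Tendsto (fun n => P {ω | ε < levyProkhorovDist (μ n ω) L}) atTop (𝓝 0)) :
    ∃ c, TendstoInMeasure P Y atTop fun _ => c := by
  obtain ⟨S, hS, hSshift⟩ := hshift.exists_mem
  refine exists_tendstoInMeasure_const_of_forall_exists_dist_lt fun η hη => ?_
  obtain ⟨δ, hδ, hrigid⟩ := exists_pos_abs_lt_of_levyProkhorovDist_map_add_lt L hη
  set A := fun n => {ω | δ / 5 < levyProkhorovDist (ν n ω) K}
  set B := fun n => {ω | δ / 5 < levyProkhorovDist (μ n ω) L}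
  refine ⟨fun n => S ∩ (A n)ᶜ ∩ (B n)ᶜ, ?_, fun n m ω hω ω' hω' => ?_⟩
  · refine tendsto_of_tendsto_of_tendsto_of_le_of_le tendsto_const_nhds
      (by simpa using (hν (δ / 5) (by positivity)).add (hμ (δ / 5) (by positivity)))
      (fun _ => zero_le) fun n => ?_
    calc P (S ∩ (A n)ᶜ ∩ (B n)ᶜ)ᶜ ≤ P (Sᶜ ∪ (A n ∪ B n)) := by
          refine measure_mono fun ω hω => ?_
          simp only [mem_compl_iff, mem_inter_iff, mem_union, not_and_or, not_not] at hω ⊢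
          tauto
      _ ≤ P Sᶜ + (P (A n) + P (B n)) :=
          (measure_union_le _ _).trans (by gcongr; exact measure_union_le _ _)
      _ = P (A n) + P (B n) := by rw [mem_ae_iff.mp hS, zero_add]
  · obtain ⟨⟨hωS, hωA⟩, hωB⟩ := hω
    obtain ⟨⟨hω'S, hω'A⟩, hω'B⟩ := hω'
    simp only [A, B, mem_compl_iff, mem_ofPred_eq, not_lt, hSshift ω hωS, hSshift ω' hω'S]
      at hωA hωB hω'A hω'B
    rw [Real.dist_eq]
    refine hrigid _ ((levyProkhorovDist_map_sub_add_le K L (μ n ω) (μ m ω') _ _).trans_lt ?_)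
    linarith

theorem stmt_18_general {Ω : Type*} {mΩ : MeasurableSpace Ω} [StandardBorelSpace Ω]
    (P : Measure Ω) [IsProbabilityMeasure P]
    (𝒢 : MeasurableSpace Ω) (h𝒢 : 𝒢 ≤ mΩ)
    (Y Z : ℕ → Ω → ℝ)
    (hYmeas : ∀ n, Measurable[𝒢] (Y n)) (hZmeas : ∀ n, Measurable[mΩ] (Z n))
    (K L : Measure ℝ) [IsProbabilityMeasure K] [IsProbabilityMeasure L]
    -- the conditional law of Yₙ + Zₙ given 𝒢 converges to K in probability
    -- (in the Lévy–Prokhorov metric)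
    (hK : ∀ ε > (0 : ℝ), Tendsto
      (fun n => P {ω | ε < levyProkhorovDist
        (@Measure.map Ω ℝ mΩ Real.measurableSpace (fun ω' => Y n ω' + Z n ω')
          (condExpKernel (mΩ := mΩ) P 𝒢 ω)) K})
      atTop (𝓝 0))
    -- the conditional law of Zₙ given 𝒢 converges to L in probability
    (hL : ∀ ε > (0 : ℝ), Tendsto
      (fun n => P {ω | ε < levyProkhorovDist
        (@Measure.map Ω ℝ mΩ Real.measurableSpace (Z n) (condExpKernel (mΩ := mΩ) P 𝒢 ω)) L})
      atTop (𝓝 0)) :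
    ∃ Ylim : Ω → ℝ, TendstoInMeasure P Y atTop Ylim := by
  obtain ⟨c, hc⟩ := exists_tendstoInMeasure_const_of_map_add_eq K L (fun _ _ => inferInstance)
    (ae_all_iff.mpr fun n => ae_map_condExpKernel_eq_map_map (μ := P) (g := (· + ·)) h𝒢
      (hYmeas n) (hZmeas n) measurable_add) hK hL
  exact ⟨_, hc⟩

theorem stmt_18 {Ω : Type*} {mΩ : MeasurableSpace Ω} [StandardBorelSpace Ω] [Nonempty Ω]
    (P : Measure Ω) [IsProbabilityMeasure P]
    (𝒢 : MeasurableSpace Ω) (h𝒢 : 𝒢 ≤ mΩ)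
    (Y Z : ℕ → Ω → ℝ)
    (hYmeas : ∀ n, Measurable[𝒢] (Y n)) (hZmeas : ∀ n, Measurable[mΩ] (Z n))
    (K L : Measure ℝ) [IsProbabilityMeasure K] [IsProbabilityMeasure L]
    -- L is nondegenerate
    (hLnondeg : ∀ c : ℝ, L ≠ Measure.dirac c)
    -- the conditional law of Yₙ + Zₙ given 𝒢 converges to K in probability
    -- (in the Lévy–Prokhorov metric)
    (hK : ∀ ε > (0 : ℝ), Tendsto
      (fun n => P {ω | ε < levyProkhorovDist
        (@Measure.map Ω ℝ mΩ Real.measurableSpace (fun ω' => Y n ω' + Z n ω')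
          (condExpKernel (mΩ := mΩ) P 𝒢 ω)) K})
      atTop (𝓝 0))
    -- the conditional law of Zₙ given 𝒢 converges to L in probability
    (hL : ∀ ε > (0 : ℝ), Tendsto
      (fun n => P {ω | ε < levyProkhorovDist
        (@Measure.map Ω ℝ mΩ Real.measurableSpace (Z n) (condExpKernel (mΩ := mΩ) P 𝒢 ω)) L})
      atTop (𝓝 0)) :
    ∃ Ylim : Ω → ℝ, TendstoInMeasure P Y atTop Ylim :=
  stmt_18_general P 𝒢 h𝒢 Y Z hYmeas hZmeas K L hK hL
end
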